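/- Let p, q ∈ (1,∞) and 0 < α < 1. Then ∫_α^∞ |sin_p(x)/x|^q dx ≤ (sin_p(α)/α)^q (1-α) + 1/(q-1). -/

import Mathlib

/-!
On `(0, 1)` the function `sin_p` takes values in `[0, 1)` and inverts `F_p`, whose integrand is
increasing. The average of an increasing function over `[0, y]` increases with `y`, so
`F_p(y) / y` increases and `sin_p(x) / x` decreases on `(0, 1)`; this bounds the integral over
`(α, 1]` by `(sin_p(α) / α)^q (1 - α)`. Oddness and the reflection about `π_p / 2` give
`|sin_p| ≤ 1` everywhere, so the integral over `(1, ∞)` is at most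
`∫₁^∞ x^(-q) dx = 1/(q-1)`.
-/

open Real

noncomputable def pi_p (p : ℝ) : ℝ := 2 * π / (p * Real.sin (π / p))

noncomputable def Fp (p y : ℝ) : ℝ := ∫ t in (0:ℝ)..y, (1 - t ^ p) ^ (-(1/p) : ℝ)

open Set MeasureTheory

theorem mul_integral_le_mul_integral_of_monotoneOn {f : ℝ → ℝ} {a b : ℝ}
    (hf : MonotoneOn f (Icc 0 b)) (ha : 0 ≤ a) (hab : a ≤ b) :
    b * ∫ t in 0..a, f t ≤ a * ∫ t in 0..b, f t := by
  have hint : ∀ {x y}, 0 ≤ x → x ≤ y → y ≤ b → IntervalIntegrable f volume x y :=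
    fun hx hxy hy =>
      (hf.mono (by rw [uIcc_of_le hxy]; exact Icc_subset_Icc hx hy)).intervalIntegrable
  have hhead : ∫ t in 0..a, f t ≤ a * f a := by
    simpa using intervalIntegral.integral_mono_on ha (hint le_rfl ha hab) intervalIntegrable_const
      fun t ht => hf ⟨ht.1, ht.2.trans hab⟩ ⟨ha, hab⟩ ht.2
  have htail : (b - a) * f a ≤ ∫ t in a..b, f t := by
    simpa using intervalIntegral.integral_mono_on hab intervalIntegrable_const
      (hint ha hab le_rfl) fun t ht => hf ⟨ha, hab⟩ ⟨ha.trans ht.1, ht.2⟩ ht.1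
  rw [← intervalIntegral.integral_add_adjacent_intervals (hint le_rfl ha hab)
    (hint ha hab le_rfl)]
  nlinarith [mul_le_mul_of_nonneg_left htail ha,
    mul_le_mul_of_nonneg_left hhead (sub_nonneg.2 hab)]

section Fp

variable {p : ℝ}

theorem monotoneOn_Fp_integrand (hp : 0 < p) :
    MonotoneOn (fun t : ℝ => (1 - t ^ p) ^ (-(1/p) : ℝ)) (Ico 0 1) := by
  intro t ht s hs hts
  have hs1 : s ^ p < 1 := rpow_lt_one hs.1 hs.2 hp
  have hts' : t ^ p ≤ s ^ p := rpow_le_rpow ht.1 hts hp.le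
  exact rpow_le_rpow_of_nonpos (by linarith) (by linarith) (neg_nonpos.2 (by positivity))

theorem one_le_Fp_integrand (hp : 0 < p) {t : ℝ} (ht : t ∈ Ico (0:ℝ) 1) :
    1 ≤ (1 - t ^ p) ^ (-(1/p) : ℝ) := by
  simpa [zero_rpow hp.ne'] using monotoneOn_Fp_integrand hp ⟨le_rfl, one_pos⟩ ht ht.1

-- In fact `Fp p 1 = π_p / 2`; the dichotomy avoids proving that the singular integrand is
-- integrable on `[0, 1]`.
theorem Fp_one_eq_zero_or_one_le (hp : 0 < p) : Fp p 1 = 0 ∨ 1 ≤ Fp p 1 := by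
  by_cases hi : IntervalIntegrable (fun t : ℝ => (1 - t ^ p) ^ (-(1/p) : ℝ)) volume 0 1
  · right
    have hge : ∀ᵐ t ∂volume.restrict (Icc (0:ℝ) 1),
        (1:ℝ) ≤ (1 - t ^ p) ^ (-(1/p) : ℝ) := by
      rw [← Measure.restrict_congr_set Ico_ae_eq_Icc]
      exact ae_restrict_of_forall_mem measurableSet_Ico fun t ht => one_le_Fp_integrand hp ht
    simpa [Fp] using
      intervalIntegral.integral_mono_ae_restrict zero_le_one intervalIntegrable_const hi hge
  · exact Or.inl (intervalIntegral.integral_undef hi)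

theorem mul_Fp_le_mul_Fp (hp : 0 < p) {a b : ℝ} (ha : 0 ≤ a) (hab : a ≤ b) (hb : b < 1) :
    b * Fp p a ≤ a * Fp p b :=
  mul_integral_le_mul_integral_of_monotoneOn
    ((monotoneOn_Fp_integrand hp).mono (Icc_subset_Ico_right hb)) ha hab

theorem antitoneOn_div_of_Fp_eq {s : ℝ → ℝ} (hp : 0 < p)
    (hs : ∀ x ∈ Ioo (0:ℝ) 1, s x ∈ Icc 0 1 ∧ Fp p (s x) = x) :
    AntitoneOn (fun x => s x / x) (Ioo 0 1) := by
  intro α hα x hx hαx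
  obtain ⟨⟨ha0, -⟩, hFa⟩ := hs α hα
  obtain ⟨⟨hb0, hb1⟩, hFb⟩ := hs x hx
  have hb1' : s x < 1 := by
    refine hb1.lt_of_ne fun h => ?_
    rw [h] at hFb
    rcases Fp_one_eq_zero_or_one_le hp with h' | h' <;> linarith [hx.1, hx.2]
  dsimp only
  rw [div_le_div_iff₀ hx.1 hα.1]
  rcases le_total (s x) (s α) with h | h
  · nlinarith [hα.1]
  · have := mul_Fp_le_mul_Fp hp ha0 h hb1'
    rw [hFa, hFb] at this
    linarith

end Fp

theorem one_lt_pi_p_div_two {p : ℝ} (hp : 1 < p) : 1 < pi_p p / 2 := by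
  have hp0 : 0 < p := by linarith
  have hsin : 0 < sin (π / p) := sin_pos_of_pos_of_lt_pi (by positivity) (div_lt_self pi_pos hp)
  have hlt : p * sin (π / p) < π :=
    calc p * sin (π / p) < p * (π / p) := mul_lt_mul_of_pos_left (sin_lt (by positivity)) hp0
      _ = π := by field_simp
  rw [show pi_p p / 2 = π / (p * sin (π / p)) by rw [pi_p]; ring, one_lt_div (by positivity)]
  exact hlt

theorem abs_le_of_odd_of_reflect {f : ℝ → ℝ} {c M : ℝ} (hc : 0 < c)
    (hodd : ∀ x, f (-x) = -f x) (hrefl : ∀ x, f (c - x) = f (c + x))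
    (hM : ∀ x ∈ Icc 0 c, |f x| ≤ M) (x : ℝ) : |f x| ≤ M := by
  have hanti : Function.Antiperiodic f (2 * c) := fun x => by
    rw [show x + 2 * c = c + (c + x) by ring, ← hrefl, show c - (c + x) = -x by ring, hodd]
  have hper : Function.Periodic (fun x => |f x|) (2 * c) := fun x => by
    simp only [hanti x, abs_neg]
  obtain ⟨y, ⟨hy1, hy2⟩, hxy⟩ := hper.exists_mem_Ico (by positivity) x (-c)
  rw [hxy]
  rcases le_total 0 y with h | h
  · exact hM y ⟨h, by linarith⟩
  · rw [← abs_neg, ← hodd]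
    exact hM (-y) ⟨by linarith, by linarith⟩

theorem integral_Ioc_le_of_le_on_Ioo {f : ℝ → ℝ} {a b C : ℝ} (hab : a ≤ b)
    (hf0 : ∀ x ∈ Ioo a b, 0 ≤ f x) (hfC : ∀ x ∈ Ioo a b, f x ≤ C) :
    ∫ x in Ioc a b, f x ≤ C * (b - a) := by
  have hnorm := norm_setIntegral_le_of_norm_le_const (f := f)
    (measure_Ioo_lt_top (μ := volume) (a := a) (b := b)) fun x hx => by
      rw [Real.norm_of_nonneg (hf0 x hx)]
      exact hfC x hx
  rw [Real.volume_real_Ioo_of_le hab] at hnorm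
  rw [integral_Ioc_eq_integral_Ioo]
  exact (le_abs_self _).trans hnorm

theorem integral_Ioi_le_add_of_nonneg {f : ℝ → ℝ} {a b A B : ℝ} (hab : a ≤ b)
    (hf0 : ∀ x ∈ Ioi a, 0 ≤ f x) (hA : ∫ x in Ioc a b, f x ≤ A)
    (hB : ∫ x in Ioi b, f x ≤ B) :
    ∫ x in Ioi a, f x ≤ A + B := by
  by_cases hint : IntegrableOn f (Ioi a)
  · rw [← Ioc_union_Ioi_eq_Ioi hab,
      setIntegral_union (Ioc_disjoint_Ioi le_rfl) measurableSet_Ioi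
        (hint.mono_set Ioc_subset_Ioi_self) (hint.mono_set (Ioi_subset_Ioi hab))]
    exact add_le_add hA hB
  · rw [integral_undef hint]
    have hA0 := (setIntegral_nonneg measurableSet_Ioc fun x hx => hf0 x hx.1).trans hA
    have hB0 := (setIntegral_nonneg measurableSet_Ioi
      fun x (hx : b < x) => hf0 x (hab.trans_lt hx)).trans hB
    linarith

theorem integral_Ioi_one_abs_div_rpow_le {g : ℝ → ℝ} {q : ℝ} (hq : 1 < q)
    (hg : ∀ x ∈ Ioi (1:ℝ), |g x| ≤ 1) :
    ∫ x in Ioi (1:ℝ), |g x / x| ^ q ≤ 1 / (q - 1) := by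
  have hbound : ∀ x ∈ Ioi (1:ℝ), |g x / x| ^ q ≤ x ^ (-q) := fun x hx => by
    have hx0 : (0:ℝ) < x := one_pos.trans hx
    have habs : |g x / x| ≤ x⁻¹ := by
      rw [abs_div, abs_of_pos hx0, div_eq_mul_inv]
      exact mul_le_of_le_one_left (inv_nonneg.2 hx0.le) (hg x hx)
    calc |g x / x| ^ q ≤ x⁻¹ ^ q := rpow_le_rpow (abs_nonneg _) habs (by linarith)
      _ = x ^ (-q) := by rw [inv_rpow hx0.le, rpow_neg hx0.le]
  calc ∫ x in Ioi (1:ℝ), |g x / x| ^ q ≤ ∫ x in Ioi (1:ℝ), x ^ (-q) :=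
        integral_mono_of_nonneg (ae_of_all _ fun x => by positivity)
          (integrableOn_Ioi_rpow_of_lt (by linarith) one_pos)
          (ae_restrict_of_forall_mem measurableSet_Ioi hbound)
    _ = 1 / (q - 1) := by
        rw [integral_Ioi_rpow_of_lt (by linarith) one_pos, one_rpow,
          div_eq_div_iff (by linarith) (by linarith)]
        ring

theorem tail_integral_bound_lt_one (p q : ℝ) (hp : 1 < p) (hq : 1 < q)
    (sinp : ℝ → ℝ)
    (hbase : ∀ x ∈ Set.Icc 0 (pi_p p / 2),
      sinp x ∈ Set.Icc (0:ℝ) 1 ∧ Fp p (sinp x) = x)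
    (hodd : ∀ x, sinp (-x) = - sinp x)
    (hrefl : ∀ x, sinp (pi_p p / 2 - x) = sinp (pi_p p / 2 + x))
    (α : ℝ) (hα0 : 0 < α) (hα1 : α < 1) :
    ∫ x in Set.Ioi α, |sinp x / x| ^ q ≤
      (sinp α / α) ^ q * (1 - α) + 1 / (q - 1) := by
  have hc : 1 < pi_p p / 2 := one_lt_pi_p_div_two hp
  have hbase01 : ∀ x ∈ Ioo (0:ℝ) 1, sinp x ∈ Icc 0 1 ∧ Fp p (sinp x) = x :=
    fun x hx => hbase x ⟨hx.1.le, by linarith [hx.2]⟩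
  have habs : ∀ x, |sinp x| ≤ 1 := abs_le_of_odd_of_reflect (by linarith) hodd hrefl
    fun x hx => by rw [abs_of_nonneg (hbase x hx).1.1]; exact (hbase x hx).1.2
  have hsinc := antitoneOn_div_of_Fp_eq (by linarith) hbase01
  refine integral_Ioi_le_add_of_nonneg hα1.le (fun x _ => by positivity) ?_
    (integral_Ioi_one_abs_div_rpow_le hq fun x _ => habs x)
  refine integral_Ioc_le_of_le_on_Ioo hα1.le (fun x _ => by positivity) fun x hx => ?_
  have hx0 : 0 < x := hα0.trans hx.1
  have hsx : 0 ≤ sinp x / x := div_nonneg (hbase01 x ⟨hx0, hx.2⟩).1.1 hx0.le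
  rw [abs_of_nonneg hsx]
  exact rpow_le_rpow hsx (hsinc ⟨hα0, hα1⟩ ⟨hx0, hx.2⟩ hx.1.le) (by linarith)
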